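/- arXiv:2009.05774 — 8 statements merged into one kernel-verified Lean document; each statement's English description precedes it below -/
import Mathlib

section
/- The unit theory is a two-sided identity for sequential composition: for every propositional Horn theory P over A, 1_A ∘ P = P and P ∘ 1_A = P. -/
/-- A propositional Horn theory over atoms `A`: a finite set of rules `(head, body)`. -/
abbrev Theory (A : Type*) := Finset (A × Finset A)

variable {A : Type*} [Fintype A] [DecidableEq A]

/-- Heads of a (sub)theory. -/
def heads (S : Theory A) : Finset A := S.image Prod.fst

/-- Body atoms of a (sub)theory. -/
def bodies (S : Theory A) : Finset A := S.biUnion Prod.snd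

/-- Sequential composition of propositional Horn theories. -/
def comp (P R : Theory A) : Theory A :=
  P.biUnion fun r =>
    (R.powerset.filter fun S => S.card = r.2.card ∧ heads S = r.2).image
      fun S => (r.1, bodies S)

/-- The unit theory `1_A = {a ← a | a ∈ A}`. -/
def unitTheory (A : Type*) [Fintype A] [DecidableEq A] : Theory A :=
  Finset.univ.image fun a => (a, ({a} : Finset A))

/-- The theory associated with an interpretation `I ⊆ A`. -/
def interp (I : Finset A) : Theory A := I.image fun a => (a, (∅ : Finset A))

/-- The van Emden–Kowalski operator. -/
def vek (P : Theory A) (I : Finset A) : Finset A :=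
  (P.filter fun r => r.2 ⊆ I).image Prod.fst

/-- The facts (rules with empty body) of a theory. -/
def facts (P : Theory A) : Theory A := P.filter fun r => r.2 = ∅

/-- The proper rules (rules with nonempty body) of a theory. -/
def proper (P : Theory A) : Theory A := P.filter fun r => r.2 ≠ ∅

/-- The left reduct `^I P`. -/
def leftReduct (I : Finset A) (P : Theory A) : Theory A := P.filter fun r => r.1 ∈ I

/-- The right reduct `P^I`. -/
def rightReduct (P : Theory A) (I : Finset A) : Theory A := P.filter fun r => r.2 ⊆ I

/-- The restricted unit theory `1^I = {a ← a | a ∈ I}`. -/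
def unitOn (I : Finset A) : Theory A := I.image fun a => (a, ({a} : Finset A))

/-- The closure `cl_B(P) = {b ← b | b ∈ B} ∪ P`. -/
def cl (B : Finset A) (P : Theory A) : Theory A :=
  (B.image fun b => (b, ({b} : Finset A))) ∪ P

/-- The unit theory is a two-sided identity for sequential composition. -/
theorem unitTheory_comp_and_comp_unitTheory (P : Theory A) :
    comp (unitTheory A) P = P ∧ comp P (unitTheory A) = P := by
  have hmem : ∀ r : A × Finset A, r ∈ unitTheory A ↔ r.2 = {r.1} := by
    intro r
    simp only [unitTheory, Finset.mem_image, Finset.mem_univ, true_and]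
    constructor
    · rintro ⟨a, rfl⟩; rfl
    · intro h; exact ⟨r.1, by rw [← h]⟩
  constructor
  · ext x
    simp only [comp, Finset.mem_biUnion, Finset.mem_image, Finset.mem_filter,
      Finset.mem_powerset]
    constructor
    · rintro ⟨r, hr, S, ⟨hS, hcard, hheads⟩, rfl⟩
      rw [hmem] at hr
      rw [hr, Finset.card_singleton] at hcard
      obtain ⟨s, rfl⟩ := Finset.card_eq_one.mp hcard
      have hs : s ∈ P := hS (Finset.mem_singleton_self s)
      have h1 : s.1 = r.1 := by
        have : s.1 ∈ heads {s} := Finset.mem_image_of_mem _ (Finset.mem_singleton_self s)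
        rw [hheads, hr, Finset.mem_singleton] at this; exact this
      have h2 : bodies {s} = s.2 := by simp [bodies]
      rw [h2, ← h1]
      exact hs
    · intro hx
      refine ⟨(x.1, {x.1}), (hmem _).mpr rfl, {x}, ⟨?_, ?_, ?_⟩, ?_⟩
      · simpa using hx
      · simp
      · simp [heads]
      · simp [bodies]
  · ext x
    simp only [comp, Finset.mem_biUnion, Finset.mem_image, Finset.mem_filter,
      Finset.mem_powerset]
    constructor
    · rintro ⟨r, hr, S, ⟨hS, hcard, hheads⟩, rfl⟩
      have hb : bodies S = heads S := by
        unfold bodies heads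
        rw [Finset.biUnion_congr rfl (fun s hs => by
          rw [(hmem s).mp (hS hs)])]
        rw [← Finset.biUnion_singleton]
      rw [hb, hheads]
      exact hr
    · intro hx
      refine ⟨x, hx, x.2.image fun a => (a, ({a} : Finset A)), ⟨?_, ?_, ?_⟩, ?_⟩
      · intro s hs
        simp only [Finset.mem_image] at hs
        obtain ⟨a, _, rfl⟩ := hs
        exact (hmem _).mpr rfl
      · rw [Finset.card_image_of_injective _ (fun a b h => (Prod.mk.injEq _ _ _ _ ▸ h).1)]
      · unfold heads
        ext a; simp
      · unfold bodies
        have : x = (x.1, x.2) := rfl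
        rw [this, Prod.mk.injEq]
        refine ⟨rfl, ?_⟩
        ext a; simp
end

section
/- Krom theories distribute from the left over union: if K is a propositional Krom-Horn theory over A (every rule of K has at most one body atom), then for all propositional Horn theories P and R over A, K ∘ (P ∪ R) = (K ∘ P) ∪ (K ∘ R). -/
variable {A : Type*} [Fintype A] [DecidableEq A]

/-- Krom theories distribute from the left over union. -/
theorem krom_comp_union_left_distrib (K P R : Theory A)
    (hK : ∀ r ∈ K, r.2.card ≤ 1) :
    comp K (P ∪ R) = comp K P ∪ comp K R := by
  ext x
  simp only [comp, Finset.mem_union, Finset.mem_biUnion, Finset.mem_image,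
    Finset.mem_filter, Finset.mem_powerset]
  constructor
  · rintro ⟨r, hr, S, ⟨hSub, hcard, hheads⟩, hx⟩
    have hS1 : S.card ≤ 1 := hcard ▸ hK r hr
    interval_cases h : S.card
    · have hSe : S = ∅ := Finset.card_eq_zero.mp h
      exact Or.inl ⟨r, hr, S, ⟨hSe ▸ Finset.empty_subset _, h.trans hcard, hheads⟩, hx⟩
    · obtain ⟨s, hSe⟩ := Finset.card_eq_one.mp h
      have hs : s ∈ P ∪ R := hSub (by simp [hSe])
      rcases Finset.mem_union.mp hs with h' | h'
      · exact Or.inl ⟨r, hr, S, ⟨by simp [hSe, h'], h.trans hcard, hheads⟩, hx⟩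
      · exact Or.inr ⟨r, hr, S, ⟨by simp [hSe, h'], h.trans hcard, hheads⟩, hx⟩
  · rintro (⟨r, hr, S, ⟨hSub, hcard, hheads⟩, hx⟩ | ⟨r, hr, S, ⟨hSub, hcard, hheads⟩, hx⟩)
    · exact ⟨r, hr, S, ⟨hSub.trans Finset.subset_union_left, hcard, hheads⟩, hx⟩
    · exact ⟨r, hr, S, ⟨hSub.trans Finset.subset_union_right, hcard, hheads⟩, hx⟩
end

section
/- A propositional Horn theory P over A commutes with an interpretation I ⊆ A if and only if I is a supported model of P: P ∘ ⟨I⟩ = ⟨I⟩ ∘ P if and only if T_P(I) = I. -/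
variable {A : Type*} [Fintype A] [DecidableEq A]

lemma mem_interp {I : Finset A} {x : A × Finset A} :
    x ∈ interp I ↔ x.1 ∈ I ∧ x.2 = ∅ := by
  constructor
  · intro h
    simp only [interp, Finset.mem_image] at h
    obtain ⟨a, ha, rfl⟩ := h
    exact ⟨ha, rfl⟩
  · rintro ⟨h1, h2⟩
    simp only [interp, Finset.mem_image]
    exact ⟨x.1, h1, by rw [← h2]⟩

lemma comp_interp_left (P : Theory A) (I : Finset A) :
    comp (interp I) P = interp I := by
  ext x
  simp only [comp, Finset.mem_biUnion, Finset.mem_image, Finset.mem_filter,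
    Finset.mem_powerset]
  constructor
  · rintro ⟨r, hr, S, ⟨hSP, hcard, hheads⟩, rfl⟩
    rw [mem_interp] at hr
    obtain ⟨hr1, hr2⟩ := hr
    rw [hr2, Finset.card_empty] at hcard
    have hS : S = ∅ := Finset.card_eq_zero.mp hcard
    rw [mem_interp]
    exact ⟨hr1, by simp [hS, bodies]⟩
  · intro hx
    rw [mem_interp] at hx
    obtain ⟨h1, h2⟩ := hx
    refine ⟨x, mem_interp.mpr ⟨h1, h2⟩, ∅, ⟨Finset.empty_subset _, ?_, ?_⟩, ?_⟩
    · simp [h2]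
    · simp [heads, h2]
    · simp [bodies, ← h2]

lemma comp_interp_right (P : Theory A) (I : Finset A) :
    comp P (interp I) = interp (vek P I) := by
  ext x
  simp only [comp, Finset.mem_biUnion, Finset.mem_image, Finset.mem_filter,
    Finset.mem_powerset]
  constructor
  · rintro ⟨r, hr, S, ⟨hSI, hcard, hheads⟩, rfl⟩
    have hbody : bodies S = ∅ := by
      apply Finset.eq_empty_of_forall_notMem
      intro a ha
      simp only [bodies, Finset.mem_biUnion] at ha
      obtain ⟨s, hs, has⟩ := ha
      rw [(mem_interp.mp (hSI hs)).2] at has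
      exact absurd has (Finset.notMem_empty a)
    have hsub : r.2 ⊆ I := by
      rw [← hheads]
      intro a ha
      simp only [heads, Finset.mem_image] at ha
      obtain ⟨s, hs, rfl⟩ := ha
      exact (mem_interp.mp (hSI hs)).1
    rw [mem_interp]
    refine ⟨?_, hbody⟩
    simp only [vek, Finset.mem_image, Finset.mem_filter]
    exact ⟨r, ⟨hr, hsub⟩, rfl⟩
  · intro hx
    rw [mem_interp] at hx
    obtain ⟨h1, h2⟩ := hx
    simp only [vek, Finset.mem_image, Finset.mem_filter] at h1
    obtain ⟨r, ⟨hrP, hrsub⟩, hr1⟩ := h1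
    refine ⟨r, hrP, r.2.image (fun b => (b, (∅ : Finset A))), ⟨?_, ?_, ?_⟩, ?_⟩
    · intro s hs
      simp only [Finset.mem_image] at hs
      obtain ⟨b, hb, rfl⟩ := hs
      exact mem_interp.mpr ⟨hrsub hb, rfl⟩
    · exact Finset.card_image_of_injective _ (fun a b h => (Prod.mk.injEq _ _ _ _ ▸ h).1)
    · ext a
      simp [heads, Finset.mem_image]
    · have : bodies (r.2.image (fun b => (b, (∅ : Finset A)))) = ∅ := by
        apply Finset.eq_empty_of_forall_notMem
        intro a ha
        simp [bodies, Finset.mem_biUnion] at ha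
      rw [this, ← h2]
      exact Prod.ext hr1 rfl

/-- A theory commutes with an interpretation iff that interpretation is a
supported model of the theory. -/
theorem comp_interp_comm_iff_supported (P : Theory A) (I : Finset A) :
    comp P (interp I) = comp (interp I) P ↔ vek P I = I := by
  rw [comp_interp_left, comp_interp_right]
  constructor
  · intro h
    ext a
    have h1 : (a, (∅ : Finset A)) ∈ interp (vek P I) ↔ (a, (∅ : Finset A)) ∈ interp I := by
      rw [h]
    simp only [mem_interp, and_true] at h1
    exact h1
  · intro h; rw [h]
end

section
/- A propositional Horn theory P over A is idempotent if and only if proper(P) ∘ facts(P) ⊆ facts(P) and proper(P) = proper(proper(P) ∘ P); that is, P ∘ P = P holds iff both of these conditions hold. -/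
variable {A : Type*} [Fintype A] [DecidableEq A]

lemma mem_comp {x : A × Finset A} {P R : Theory A} :
    x ∈ comp P R ↔ ∃ r ∈ P, ∃ S, S ⊆ R ∧ S.card = r.2.card ∧ heads S = r.2 ∧
      (r.1, bodies S) = x := by
  simp only [comp, Finset.mem_biUnion, Finset.mem_image, Finset.mem_filter,
    Finset.mem_powerset]
  constructor
  · rintro ⟨r, hr, S, ⟨hS, hc, hh⟩, hx⟩
    exact ⟨r, hr, S, hS, hc, hh, hx⟩
  · rintro ⟨r, hr, S, hS, hc, hh, hx⟩
    exact ⟨r, hr, S, ⟨hS, hc, hh⟩, hx⟩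

lemma comp_facts_left (P R : Theory A) : comp (facts P) R = facts P := by
  ext x
  rw [mem_comp]
  constructor
  · rintro ⟨r, hr, S, hS, hc, hh, hx⟩
    rw [facts, Finset.mem_filter] at hr
    have hS0 : S = ∅ := Finset.card_eq_zero.mp (by rw [hc, hr.2]; simp)
    subst hS0
    have : (r.1, bodies (∅ : Theory A)) = r := by
      simp [bodies]; exact Prod.ext rfl hr.2.symm
    rw [this] at hx
    rw [facts, Finset.mem_filter]
    exact hx ▸ hr
  · intro hx
    have hx2 : x.2 = ∅ := (Finset.mem_filter.mp hx).2
    refine ⟨x, hx, ∅, by simp, by simp [hx2], by simp [heads, hx2], ?_⟩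
    simp [bodies]
    exact Prod.ext rfl hx2.symm

lemma bodies_eq_empty {S : Theory A} : bodies S = ∅ ↔ ∀ s ∈ S, s.2 = ∅ := by
  unfold bodies
  constructor
  · intro h s hs
    have h2 := Finset.subset_biUnion_of_mem Prod.snd hs
    rw [h] at h2
    exact Finset.subset_empty.mp h2
  · intro h
    apply Finset.eq_empty_iff_forall_notMem.mpr
    intro a ha
    obtain ⟨s, hs, ha⟩ := Finset.mem_biUnion.mp ha
    rw [h s hs] at ha
    exact absurd ha (Finset.notMem_empty a)

lemma facts_comp (Q P : Theory A) : facts (comp Q P) = comp Q (facts P) := by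
  ext x
  rw [facts, Finset.mem_filter, mem_comp, mem_comp]
  constructor
  · rintro ⟨⟨r, hr, S, hS, hc, hh, hx⟩, hx2⟩
    refine ⟨r, hr, S, ?_, hc, hh, hx⟩
    intro s hs
    rw [facts, Finset.mem_filter]
    refine ⟨hS hs, ?_⟩
    have : bodies S = ∅ := by rw [← hx] at hx2; exact hx2
    exact bodies_eq_empty.mp this s hs
  · rintro ⟨r, hr, S, hS, hc, hh, hx⟩
    have hSf : ∀ s ∈ S, s.2 = ∅ := fun s hs => (Finset.mem_filter.mp (hS hs)).2
    have hSP : S ⊆ P := fun s hs => (Finset.mem_filter.mp (hS hs)).1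
    refine ⟨⟨r, hr, S, hSP, hc, hh, hx⟩, ?_⟩
    rw [← hx]
    exact bodies_eq_empty.mpr hSf

lemma facts_union_proper (P : Theory A) : facts P ∪ proper P = P := by
  ext x; simp [facts, proper]; tauto

lemma eq_iff_facts_proper {X Y : Theory A} :
    X = Y ↔ facts X = facts Y ∧ proper X = proper Y := by
  constructor
  · rintro rfl; exact ⟨rfl, rfl⟩
  · rintro ⟨h1, h2⟩
    rw [← facts_union_proper X, h1, h2, facts_union_proper]

lemma comp_union_left (P Q R : Theory A) :
    comp (P ∪ Q) R = comp P R ∪ comp Q R := by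
  ext x
  simp [mem_comp, Finset.mem_union, or_and_right, exists_or]

lemma facts_union (X Y : Theory A) : facts (X ∪ Y) = facts X ∪ facts Y :=
  Finset.filter_union _ _ _

lemma proper_union (X Y : Theory A) : proper (X ∪ Y) = proper X ∪ proper Y :=
  Finset.filter_union _ _ _

lemma facts_facts (P : Theory A) : facts (facts P) = facts P := by
  ext x; simp [facts]

lemma proper_facts (P : Theory A) : proper (facts P) = ∅ := by
  ext x; simp [facts, proper]

/-- A propositional Horn theory is idempotent iff
`proper(P) ∘ facts(P) ⊆ facts(P)` and `proper(P) = proper(proper(P) ∘ P)`. -/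
theorem idempotent_iff (P : Theory A) :
    comp P P = P ↔
      comp (proper P) (facts P) ⊆ facts P ∧
      proper P = proper (comp (proper P) P) := by
  have key : comp P P = facts P ∪ comp (proper P) P := by
    nth_rewrite 1 [← facts_union_proper P]
    rw [comp_union_left, comp_facts_left]
  rw [eq_iff_facts_proper (X := comp P P), key, facts_union, proper_union,
    facts_facts, proper_facts, facts_comp, Finset.empty_union,
    Finset.union_eq_left]
  tauto
end

section
/- Body atoms can be removed by composition on the right: for every propositional Horn theory P over A and every I ⊆ A, P ∘ I^⊖ = {(head r, body r ∖ I) | r ∈ P}, where I^⊖ = {(a, {a}) | a ∈ A ∖ I} ∪ {(a, ∅) | a ∈ I}. -/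
variable {A : Type*} [Fintype A] [DecidableEq A]

/-- `I^⊖ = {a ← a | a ∈ A ∖ I} ∪ {a ← | a ∈ I}`. -/
def ominus (I : Finset A) : Theory A :=
  ((Finset.univ \ I).image fun a => (a, ({a} : Finset A))) ∪
    (I.image fun a => (a, (∅ : Finset A)))

lemma bodies_of_subset_ominus {I : Finset A} {S : Theory A} (hS : S ⊆ ominus I) :
    bodies S = heads S \ I := by
  ext x
  simp only [bodies, heads, Finset.mem_biUnion, Finset.mem_sdiff, Finset.mem_image]
  constructor
  · rintro ⟨s, hs, hx⟩
    have h := hS hs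
    simp only [ominus, Finset.mem_union, Finset.mem_image, Finset.mem_sdiff,
      Finset.mem_univ, true_and] at h
    rcases h with ⟨a, haI, rfl⟩ | ⟨a, haI, rfl⟩
    · simp only [Finset.mem_singleton] at hx
      subst hx
      exact ⟨⟨_, hs, rfl⟩, haI⟩
    · simp at hx
  · rintro ⟨⟨s, hs, rfl⟩, hxI⟩
    have h := hS hs
    simp only [ominus, Finset.mem_union, Finset.mem_image, Finset.mem_sdiff,
      Finset.mem_univ, true_and] at h
    rcases h with ⟨a, haI, rfl⟩ | ⟨a, haI, rfl⟩
    · exact ⟨_, hs, by simp⟩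
    · exact absurd haI hxI

/-- Body atoms can be removed by composition on the right. -/
theorem comp_ominus (P : Theory A) (I : Finset A) :
    comp P (ominus I) = P.image fun r => (r.1, r.2 \ I) := by
  ext x
  simp only [comp, Finset.mem_biUnion, Finset.mem_image, Finset.mem_filter,
    Finset.mem_powerset]
  constructor
  · rintro ⟨r, hr, S, ⟨hSsub, hcard, hheads⟩, rfl⟩
    exact ⟨r, hr, by rw [bodies_of_subset_ominus hSsub, hheads]⟩
  · rintro ⟨r, hr, rfl⟩
    set S : Theory A := (r.2 \ I).image (fun a => (a, ({a} : Finset A))) ∪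
      (r.2 ∩ I).image (fun a => (a, (∅ : Finset A))) with hSdef
    have hsub : S ⊆ ominus I := by
      intro s hs
      simp only [hSdef, Finset.mem_union, Finset.mem_image, Finset.mem_sdiff,
        Finset.mem_inter] at hs
      rcases hs with ⟨a, ⟨_, haI⟩, rfl⟩ | ⟨a, ⟨_, haI⟩, rfl⟩
      · exact Finset.mem_union_left _ (Finset.mem_image.mpr ⟨a, by simp [haI], rfl⟩)
      · exact Finset.mem_union_right _ (Finset.mem_image.mpr ⟨a, haI, rfl⟩)
    have hheads : heads S = r.2 := by
      ext a
      simp only [hSdef, heads, Finset.image_union, Finset.image_image, Function.comp,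
        Finset.mem_union, Finset.mem_image, Finset.mem_sdiff, Finset.mem_inter]
      constructor
      · rintro (⟨b, ⟨hb, _⟩, rfl⟩ | ⟨b, ⟨hb, _⟩, rfl⟩) <;> exact hb
      · intro ha
        by_cases haI : a ∈ I
        · exact Or.inr ⟨a, ⟨ha, haI⟩, rfl⟩
        · exact Or.inl ⟨a, ⟨ha, haI⟩, rfl⟩
    have hcard : S.card = r.2.card := by
      rw [hSdef, Finset.card_union_of_disjoint, Finset.card_image_of_injective,
        Finset.card_image_of_injective, Finset.card_sdiff_add_card_inter]
      · intro a b h; exact congrArg Prod.fst h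
      · intro a b h; exact congrArg Prod.fst h
      · rw [Finset.disjoint_left]
        rintro s hs1 hs2
        simp only [Finset.mem_image] at hs1 hs2
        obtain ⟨a, _, rfl⟩ := hs1
        obtain ⟨b, _, hb⟩ := hs2
        have := congrArg Prod.snd hb
        exact Finset.singleton_ne_empty a this.symm
    refine ⟨r, hr, S, ⟨hsub, hcard, hheads⟩, ?_⟩
    rw [bodies_of_subset_ominus hsub, hheads]
end

section
/- Body atoms can be added to all proper rules by composition on the right: for every propositional Horn theory P over A and every I ⊆ A, P ∘ I^⊕ = facts(P) ∪ {(head r, body r ∪ I) | r ∈ proper(P)}, where I^⊕ = {(a, {a} ∪ I) | a ∈ A}. -/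
variable {A : Type*} [Fintype A] [DecidableEq A]

/-- `I^⊕ = {a ← ({a} ∪ I) | a ∈ A}`. -/
def oplus (I : Finset A) : Theory A :=
  Finset.univ.image fun a => (a, insert a I)

/-- Body atoms can be added to all proper rules by composition on the right. -/
theorem comp_oplus (P : Theory A) (I : Finset A) :
    comp P (oplus I) =
      facts P ∪ (proper P).image fun r => (r.1, r.2 ∪ I) := by
  have hinj : Function.Injective (fun a : A => (a, insert a I)) := by
    intro a b h
    exact (Prod.mk.injEq _ _ _ _ ▸ h : _ ∧ _).1
  have hbod : ∀ (t : Finset A), bodies (t.image fun a => (a, insert a I)) =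
      t.biUnion (fun b => insert b I) := by
    intro t
    ext a; simp [bodies]
  have hheadsim : ∀ (t : Finset A), heads (t.image fun a => (a, insert a I)) = t := by
    intro t
    rw [heads, Finset.image_image]; exact Finset.image_id
  have hbiUnion : ∀ (t : Finset A), t ≠ ∅ → t.biUnion (fun b => insert b I) = t ∪ I := by
    intro t ht
    obtain ⟨b0, hb0⟩ := Finset.nonempty_of_ne_empty ht
    ext a
    simp only [Finset.mem_biUnion, Finset.mem_insert, Finset.mem_union]
    constructor
    · rintro ⟨b, hb, rfl | h⟩
      · exact Or.inl hb
      · exact Or.inr h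
    · rintro (h | h)
      · exact ⟨a, h, Or.inl rfl⟩
      · exact ⟨b0, hb0, Or.inr h⟩
  ext x
  simp only [comp, Finset.mem_biUnion, Finset.mem_image, Finset.mem_filter,
    Finset.mem_powerset, Finset.mem_union, facts, proper]
  constructor
  · rintro ⟨r, hr, S, ⟨hS, hcard, hheads⟩, rfl⟩
    have hSeq : S = r.2.image (fun a => (a, insert a I)) := by
      refine Finset.eq_of_subset_of_card_le ?_ ?_
      · intro s hs
        have hmem := hS hs
        simp only [oplus, Finset.mem_image, Finset.mem_univ, true_and] at hmem
        obtain ⟨a, rfl⟩ := hmem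
        have ha : a ∈ heads S := Finset.mem_image_of_mem Prod.fst hs
        rw [hheads] at ha
        exact Finset.mem_image_of_mem _ ha
      · exact le_of_eq (by rw [Finset.card_image_of_injective _ hinj, hcard])
    subst hSeq
    rw [hbod]
    by_cases h2 : r.2 = ∅
    · left
      refine ⟨?_, ?_⟩
      · have : (r.1, r.2.biUnion fun b => insert b I) = r := by
          simp [h2, Prod.ext_iff]
        rw [this]; exact hr
      · simp [h2]
    · right
      exact ⟨r, ⟨hr, h2⟩, by rw [hbiUnion _ h2]⟩
  · rintro (⟨hx, hx2⟩ | ⟨r, ⟨hr, h2⟩, rfl⟩)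
    · refine ⟨x, hx, ∅, ⟨Finset.empty_subset _, ?_, ?_⟩, ?_⟩
      · simp [hx2]
      · simp [heads, hx2]
      · simp [bodies, ← hx2]
    · refine ⟨r, hr, r.2.image (fun a => (a, insert a I)),
        ⟨?_, ?_, hheadsim r.2⟩, ?_⟩
      · intro s hs
        simp only [Finset.mem_image] at hs
        obtain ⟨a, _, rfl⟩ := hs
        simp [oplus]
      · rw [Finset.card_image_of_injective _ hinj]
      · rw [hbod, hbiUnion _ h2]
end

section
/- If a propositional Horn theory P does not depend on R, then R is absorbed under composition: for all theories P, Q, R over A with body(P) ∩ head(R) = ∅, P ∘ (Q ∪ R) = P ∘ Q. -/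
variable {A : Type*} [Fintype A] [DecidableEq A]

/-- If `P` does not depend on `R`, then `R` is absorbed under composition. -/
theorem comp_union_absorb (P Q R : Theory A)
    (h : bodies P ∩ heads R = ∅) :
    comp P (Q ∪ R) = comp P Q := by
  unfold comp
  apply Finset.biUnion_congr rfl
  intro r hr
  congr 1
  ext S
  simp only [Finset.mem_filter, Finset.mem_powerset]
  constructor
  · rintro ⟨hsub, hcard, hheads⟩
    refine ⟨fun s hs => ?_, hcard, hheads⟩
    rcases Finset.mem_union.mp (hsub hs) with hQ | hR
    · exact hQ
    · exfalso
      have h1 : s.1 ∈ bodies P := by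
        have : s.1 ∈ heads S := Finset.mem_image_of_mem _ hs
        rw [hheads] at this
        exact Finset.mem_biUnion.mpr ⟨r, hr, this⟩
      have h2 : s.1 ∈ heads R := Finset.mem_image_of_mem _ hR
      have : s.1 ∈ bodies P ∩ heads R := Finset.mem_inter.mpr ⟨h1, h2⟩
      simp [h] at this
  · rintro ⟨hsub, hcard, hheads⟩
    exact ⟨hsub.trans Finset.subset_union_left, hcard, hheads⟩
end

section
/- If a propositional Horn theory P does not depend on R, then their union factors as a composition of closures: for all theories P and R over A with body(P) ∩ head(R) = ∅, P ∪ R = cl_{head(R)}(P) ∘ cl_{body(P)}(R). -/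
variable {A : Type*} [Fintype A] [DecidableEq A]

/-- If `P` does not depend on `R`, their union factors as a composition of
closures: `P ∪ R = cl_{head(R)}(P) ∘ cl_{body(P)}(R)`. -/
theorem union_eq_comp_cl (P R : Theory A)
    (h : bodies P ∩ heads R = ∅) :
    P ∪ R = comp (cl (heads R) P) (cl (bodies P) R) := by
  have hdisj : ∀ a, a ∈ bodies P → a ∉ heads R := by
    intro a ha hr
    have : a ∈ bodies P ∩ heads R := Finset.mem_inter.mpr ⟨ha, hr⟩
    simp [h] at this
  have hinj : Function.Injective (fun b : A => (b, ({b} : Finset A))) := by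
    intro a b hab; simpa using congrArg Prod.fst hab
  ext x
  simp only [comp, cl, Finset.mem_biUnion, Finset.mem_image, Finset.mem_filter,
    Finset.mem_powerset, Finset.mem_union]
  constructor
  · rintro (hx | hx)
    · -- x ∈ P : take r = x, S = x.2.image (b ↦ (b,{b}))
      refine ⟨x, Or.inr hx, x.2.image (fun b => (b, ({b} : Finset A))), ⟨?_, ?_, ?_⟩, ?_⟩
      · intro s hs
        simp only [Finset.mem_image] at hs
        obtain ⟨b, hb, rfl⟩ := hs
        exact Finset.mem_union_left _ (Finset.mem_image_of_mem
          (fun b => (b, ({b} : Finset A))) (Finset.mem_biUnion.mpr ⟨x, hx, hb⟩))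
      · exact Finset.card_image_of_injective _ hinj
      · ext a; simp [heads]
      · have : bodies (x.2.image (fun b => (b, ({b} : Finset A)))) = x.2 := by
          ext a; simp [bodies]
        rw [this]
    · -- x ∈ R : take r = (x.1, {x.1}), S = {x}
      refine ⟨(x.1, {x.1}), Or.inl ?_, {x}, ⟨?_, ?_, ?_⟩, ?_⟩
      · exact ⟨x.1, Finset.mem_image_of_mem _ hx, rfl⟩
      · intro s hs
        simp only [Finset.mem_singleton] at hs
        subst hs; exact Finset.mem_union_right _ hx
      · simp
      · simp [heads]
      · simp [bodies, Finset.singleton_biUnion]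
  · rintro ⟨r, hr, S, ⟨hS, hcard, hheads⟩, rfl⟩
    rcases hr with hr | hr
    · -- r = (b, {b}) with b ∈ heads R
      obtain ⟨b, hb, rfl⟩ := hr
      rw [show ((b, ({b} : Finset A)).2) = ({b} : Finset A) from rfl, Finset.card_singleton] at hcard
      obtain ⟨s, rfl⟩ := Finset.card_eq_one.mp hcard
      have hs1 : s.1 = b := by
        have := hheads; simp [heads] at this; exact this
      have hsR : s ∈ R := by
        rcases Finset.mem_union.mp (hS (Finset.mem_singleton_self s)) with hsl | hsr
        · simp only [Finset.mem_image] at hsl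
          obtain ⟨c, hc, hcs⟩ := hsl
          have : c = b := by rw [← hs1, ← hcs]
          exact absurd hb (this ▸ hdisj c hc)
        · exact hsr
      have : bodies ({s} : Theory A) = s.2 := by simp [bodies]
      rw [this, ← hs1]
      exact Or.inr hsR
    · -- r ∈ P : S must be r.2.image (b ↦ (b,{b}))
      have hbody : r.2 ⊆ bodies P := fun a ha =>
        Finset.mem_biUnion.mpr ⟨r, hr, ha⟩
      have hSsub : S ⊆ r.2.image (fun b => (b, ({b} : Finset A))) := by
        intro s hs
        have hs1 : s.1 ∈ r.2 := by
          rw [← hheads]; exact Finset.mem_image_of_mem _ hs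
        rcases Finset.mem_union.mp (hS hs) with hsl | hsr
        · simp only [Finset.mem_image] at hsl
          obtain ⟨c, hc, rfl⟩ := hsl
          exact Finset.mem_image_of_mem _ hs1
        · exact absurd (Finset.mem_image_of_mem Prod.fst hsr)
            (hdisj s.1 (hbody hs1))
      have hSeq : S = r.2.image (fun b => (b, ({b} : Finset A))) := by
        apply Finset.eq_of_subset_of_card_le hSsub
        rw [Finset.card_image_of_injective _ hinj, ← hcard]
      have : bodies S = r.2 := by
        rw [hSeq]; ext a; simp [bodies]
      rw [this]
      exact Or.inl hr
end
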